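/- Suppose the step sizes satisfy t_k > 0 for all k, t_k ≥ t_{k+1} for all k, lim_{k→∞} t_k = 0, and Σ_{k=0}^∞ t_k = ∞. Then liminf_{k→∞} f(x_k) = f*, where f = Σ_{i=1}^m f_i and f* = inf_{x ∈ X} f(x) ∈ ℝ ∪ {−∞} (the equality being in the extended reals: if f* = −∞ then liminf f(x_k) = −∞). -/

import Mathlib

/-!
For `z ∈ X`, the projection onto `X` does not increase distances to `z`, so with the aggregated
direction `d k` one gets
`‖x (k+1) - z‖² ≤ ‖x k - z‖² - 2 t k ⟪d k, x k - z⟫ + t k² (m C)²`.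
A convex function on `ℝⁿ` has a subgradient everywhere (Hahn–Banach applied to its strict
epigraph), so the bound `C` on subgradients over `X` gives `f i x ≤ f i y + C ‖x - y‖` for
`x ∈ X`. Since each step moves the iterate by at most `t k m C` and `t` is nonincreasing, a
subgradient taken at a delayed iterate `x (k - l)` is therefore an approximate subgradient at
`x k`, with an error of order `t (k - W + 1)`. If `∑ f i (x k)` stayed above `∑ f i z + ε`, the
squared distance to `z` would eventually drop by `t k ε / 2` per step, contradicting
`∑ t k = ∞`.
-/

open Filter Topology Finset RealInnerProductSpace

section Subgradient

variable {E : Type*}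

theorem ConvexOn.exists_dual_subgradient [NormedAddCommGroup E] [NormedSpace ℝ E] {f : E → ℝ}
    (hf : ConvexOn ℝ Set.univ f) (hcont : Continuous f) (x : E) :
    ∃ φ : StrongDual ℝ E, ∀ y, f x + φ (y - x) ≤ f y := by
  have hopen : IsOpen {p : E × ℝ | p.1 ∈ Set.univ ∧ f p.1 < p.2} := by
    simpa using isOpen_lt (hcont.comp continuous_fst) continuous_snd
  obtain ⟨Φ, hΦ⟩ := geometric_hahn_banach_open_point hf.convex_strict_epigraph hopen
    (x := (x, f x)) (by simp)
  set c := Φ (0, 1)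
  have hΦ_apply (y : E) (r : ℝ) : Φ (y, r) = Φ (y, 0) + r * c := by
    rw [show ((y, r) : E × ℝ) = (y, 0) + r • (0, 1) by simp, map_add, map_smul, smul_eq_mul]
  have hc : c < 0 := by
    have := hΦ (x, f x + 1) (by simp)
    rw [hΦ_apply x (f x + 1), hΦ_apply x (f x)] at this
    linarith
  refine ⟨(-c)⁻¹ • Φ.comp (ContinuousLinearMap.inl ℝ E ℝ), fun y => ?_⟩
  refine forall_gt_iff_le.mp fun r hr => ?_
  have hsep := hΦ (y, r) (by simpa using hr)
  rw [hΦ_apply y r, hΦ_apply x (f x)] at hsep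
  have hlin : Φ (y - x, 0) = Φ (y, 0) - Φ (x, 0) := by
    rw [← map_sub, Prod.mk_sub_mk, sub_zero]
  simp only [smul_apply, ContinuousLinearMap.comp_apply,
    ContinuousLinearMap.inl_apply, smul_eq_mul, hlin]
  rw [← lt_sub_iff_add_lt', inv_mul_lt_iff₀ (by linarith)]
  linarith

variable [NormedAddCommGroup E] [InnerProductSpace ℝ E]

theorem ConvexOn.exists_subgradient [FiniteDimensional ℝ E] {f : E → ℝ}
    (hf : ConvexOn ℝ Set.univ f) (x : E) : ∃ g : E, ∀ y, f x + ⟪g, y - x⟫ ≤ f y := by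
  have := FiniteDimensional.complete ℝ E
  obtain ⟨φ, hφ⟩ := hf.exists_dual_subgradient
    (continuousOn_univ.mp (hf.continuousOn isOpen_univ)) x
  exact ⟨(InnerProductSpace.toDual ℝ E).symm φ, by
    simpa only [InnerProductSpace.toDual_symm_apply] using hφ⟩

theorem ConvexOn.le_add_mul_norm_sub [FiniteDimensional ℝ E] {f : E → ℝ}
    (hf : ConvexOn ℝ Set.univ f) {X : Set E} {C : ℝ}
    (hC : ∀ z ∈ X, ∀ g : E, (∀ y, f z + ⟪g, y - z⟫ ≤ f y) → ‖g‖ ≤ C)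
    {x : E} (hx : x ∈ X) (y : E) : f x ≤ f y + C * ‖x - y‖ := by
  obtain ⟨g, hg⟩ := hf.exists_subgradient x
  have h₁ := hg y
  have h₂ := neg_le_of_abs_le (abs_real_inner_le_norm g (y - x))
  have h₃ := mul_le_mul_of_nonneg_right (hC x hx g hg) (norm_nonneg (y - x))
  rw [norm_sub_rev]
  linarith

end Subgradient

section Projection

variable {E : Type*} [NormedAddCommGroup E] [InnerProductSpace ℝ E] {X : Set E}

theorem norm_sub_le_of_forall_norm_sub_le (hX : Convex ℝ X) {u p z : E} (hp : p ∈ X)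
    (hmin : ∀ y ∈ X, ‖u - p‖ ≤ ‖u - y‖) (hz : z ∈ X) : ‖p - z‖ ≤ ‖u - z‖ := by
  have : Nonempty X := ⟨⟨p, hp⟩⟩
  have hinf : ‖u - p‖ = ⨅ w : X, ‖u - w‖ :=
    le_antisymm (le_ciInf fun w => hmin w w.2)
      (ciInf_le (f := fun w : X => ‖u - w‖) ⟨0, by rintro _ ⟨w, rfl⟩; positivity⟩ ⟨p, hp⟩)
  have hvi := (norm_eq_iInf_iff_real_inner_le_zero hX hp).1 hinf z hz
  have hexp : ‖u - z‖ ^ 2 = ‖u - p‖ ^ 2 - 2 * ⟪u - p, z - p⟫ + ‖p - z‖ ^ 2 := by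
    rw [show u - z = (u - p) - (z - p) by abel, norm_sub_sq_real, norm_sub_rev z p]
  rw [← sq_le_sq₀ (norm_nonneg _) (norm_nonneg _), hexp]
  nlinarith [sq_nonneg ‖u - p‖]

theorem norm_sub_le_smul_norm_of_forall_norm_sub_le (hX : Convex ℝ X) {x d p : E} {s : ℝ}
    (hx : x ∈ X) (hs : 0 ≤ s) (hp : p ∈ X) (hmin : ∀ y ∈ X, ‖x - s • d - p‖ ≤ ‖x - s • d - y‖) :
    ‖p - x‖ ≤ s * ‖d‖ := by
  simpa [norm_smul, abs_of_nonneg hs] using norm_sub_le_of_forall_norm_sub_le hX hp hmin hx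

theorem norm_sub_sq_le_of_forall_norm_sub_le (hX : Convex ℝ X) {x d p z : E} {s : ℝ}
    (hp : p ∈ X) (hmin : ∀ y ∈ X, ‖x - s • d - p‖ ≤ ‖x - s • d - y‖) (hz : z ∈ X) :
    ‖p - z‖ ^ 2 ≤ ‖x - z‖ ^ 2 - 2 * s * ⟪d, x - z⟫ + s ^ 2 * ‖d‖ ^ 2 := by
  have h := norm_sub_le_of_forall_norm_sub_le hX hp hmin hz
  calc ‖p - z‖ ^ 2 ≤ ‖x - s • d - z‖ ^ 2 := by gcongr
    _ = ‖x - z‖ ^ 2 - 2 * s * ⟪d, x - z⟫ + s ^ 2 * ‖d‖ ^ 2 := by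
      rw [show x - s • d - z = (x - z) - s • d by abel, norm_sub_sq_real, real_inner_smul_right,
        norm_smul, Real.norm_eq_abs, mul_pow, sq_abs, real_inner_comm]
      ring

theorem half_norm_sub_sq_le_of_forall_norm_sub_le (hX : Convex ℝ X) {x d p z : E} {s L c : ℝ}
    (hs : 0 ≤ s) (hp : p ∈ X) (hmin : ∀ y ∈ X, ‖x - s • d - p‖ ≤ ‖x - s • d - y‖) (hz : z ∈ X)
    (hd : ‖d‖ ≤ L) (hc : c ≤ ⟪d, x - z⟫) :
    ‖p - z‖ ^ 2 / 2 ≤ ‖x - z‖ ^ 2 / 2 - s * (c - s * L ^ 2 / 2) := by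
  have h := norm_sub_sq_le_of_forall_norm_sub_le hX hp hmin hz
  have hsc := mul_le_mul_of_nonneg_left hc hs
  have hsd : s ^ 2 * ‖d‖ ^ 2 ≤ s ^ 2 * L ^ 2 := by
    have := norm_nonneg d
    gcongr
  linarith

end Projection

section Sequences

theorem norm_sub_sub_le_of_norm_succ_sub_le {E : Type*} [SeminormedAddCommGroup E]
    {x : ℕ → E} {t : ℕ → ℝ} {L : ℝ} (ht : Antitone t) (ht0 : ∀ k, 0 ≤ t k) (hL : 0 ≤ L)
    (hstep : ∀ k, ‖x (k + 1) - x k‖ ≤ t k * L) {M l k : ℕ} (hlk : l ≤ k) (hlM : l ≤ M) :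
    ‖x k - x (k - l)‖ ≤ M * t (k - M) * L := by
  rw [← dist_eq_norm, dist_comm]
  calc dist (x (k - l)) (x k) ≤ ∑ i ∈ Ico (k - l) k, dist (x i) (x (i + 1)) :=
        dist_le_Ico_sum_dist x (Nat.sub_le k l)
    _ ≤ (Ico (k - l) k).card • (t (k - M) * L) := by
      refine sum_le_card_nsmul _ _ _ fun i hi => ?_
      rw [dist_comm, dist_eq_norm]
      have : k - M ≤ i := by have := (mem_Ico.1 hi).1; omega
      exact (hstep i).trans (mul_le_mul_of_nonneg_right (ht this) hL)
    _ ≤ M * t (k - M) * L := by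
      rw [Nat.card_Ico, Nat.sub_sub_self hlk, nsmul_eq_mul, mul_assoc]
      have := ht0 (k - M)
      gcongr

theorem sum_range_le_of_le_sub {a s : ℕ → ℝ} (ha : ∀ k, 0 ≤ a k)
    (h : ∀ k, a (k + 1) ≤ a k - s k) (N : ℕ) : ∑ k ∈ range N, s k ≤ a 0 :=
  calc ∑ k ∈ range N, s k ≤ ∑ k ∈ range N, (a k - a (k + 1)) :=
        sum_le_sum fun k _ => by linarith [h k]
    _ = a 0 - a N := sum_range_sub' a N
    _ ≤ a 0 := sub_le_self _ (ha N)

theorem frequently_lt_of_le_sub_mul {a s e F : ℕ → ℝ} {c r : ℝ} (ha : ∀ k, 0 ≤ a k)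
    (hs : ∀ k, 0 ≤ s k) (hsum : Tendsto (fun N => ∑ k ∈ range N, s k) atTop atTop)
    (he : Tendsto e atTop (𝓝 0)) (hcr : c < r)
    (hdesc : ∀ᶠ k in atTop, a (k + 1) ≤ a k - s k * (F k - c - e k)) :
    ∃ᶠ k in atTop, F k < r := by
  by_contra hF
  rw [not_frequently] at hF
  have hδ : 0 < (r - c) / 2 := by linarith
  obtain ⟨K, hK⟩ := eventually_atTop.1
    ((hdesc.and hF).and (he.eventually (gt_mem_nhds hδ)))
  have hbound (N : ℕ) : ∑ k ∈ range N, s (K + k) * ((r - c) / 2) ≤ a K := by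
    refine sum_range_le_of_le_sub (a := fun k => a (K + k)) (fun k => ha _) (fun k => ?_) N
    obtain ⟨⟨hd, hFk⟩, hek⟩ := hK (K + k) (by omega)
    have := mul_le_mul_of_nonneg_left
      (show (r - c) / 2 ≤ F (K + k) - c - e (K + k) by linarith [not_lt.1 hFk]) (hs (K + k))
    simp only [← add_assoc]
    linarith
  obtain ⟨N, hN⟩ := ((hsum.comp (tendsto_add_atTop_nat K)).eventually_gt_atTop
    (∑ k ∈ range K, s k + a K / ((r - c) / 2))).exists
  have := hbound N
  rw [← sum_mul, ← le_div_iff₀ hδ] at this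
  simp only [Function.comp_apply, add_comm N K, sum_range_add] at hN
  linarith

end Sequences

theorem liminf_coe_eq_iInf_of_frequently_lt {α : Type*} {F : α → ℝ} {x : ℕ → α} {X : Set α}
    (hx : ∀ k, x k ∈ X) (h : ∀ z ∈ X, ∀ r : ℝ, F z < r → ∃ᶠ k in atTop, F (x k) < r) :
    liminf (fun k => (F (x k) : EReal)) atTop = ⨅ z ∈ X, (F z : EReal) := by
  refine le_antisymm (le_iInf₂ fun z hz => ?_)
    (le_liminf_of_le (by isBoundedDefault) (.of_forall fun k => iInf₂_le (x k) (hx k)))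
  refine EReal.le_of_forall_lt_iff_le.1 fun r hr => liminf_le_of_frequently_le' ?_
  exact (h z hz r (mod_cast hr)).mono fun k hk => mod_cast hk.le

section IncrementalDirection

variable {E κ : Type*} [NormedAddCommGroup E] [InnerProductSpace ℝ E]

theorem norm_sum_sum_smul_le {ι : Type*} [Fintype ι] {B : ι → Finset κ} {w : ι → κ → ℝ}
    {v : ι → κ → E} {C : ℝ} (hC : 0 ≤ C) (hw0 : ∀ i, ∀ l ∈ B i, 0 ≤ w i l)
    (hw1 : ∀ i, ∑ l ∈ B i, w i l ≤ 1) (hv : ∀ i, ∀ l ∈ B i, ‖v i l‖ ≤ C) :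
    ‖∑ i, ∑ l ∈ B i, w i l • v i l‖ ≤ Fintype.card ι * C := by
  have hcomponent (i : ι) : ‖∑ l ∈ B i, w i l • v i l‖ ≤ C :=
    calc ‖∑ l ∈ B i, w i l • v i l‖ ≤ ∑ l ∈ B i, w i l * C := by
          refine norm_sum_le_of_le _ fun l hl => ?_
          rw [norm_smul, Real.norm_of_nonneg (hw0 i l hl)]
          exact mul_le_mul_of_nonneg_left (hv i l hl) (hw0 i l hl)
      _ = (∑ l ∈ B i, w i l) * C := (sum_mul _ _ _).symm
      _ ≤ C := mul_le_of_le_one_left hC (hw1 i)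
  simpa using norm_sum_le_of_le univ fun i _ => hcomponent i

variable [FiniteDimensional ℝ E] {X : Set E} {C D : ℝ}

theorem ConvexOn.sub_sub_le_inner_sum_smul {f : E → ℝ} (hf : ConvexOn ℝ Set.univ f)
    (hC0 : 0 ≤ C) (hC : ∀ z ∈ X, ∀ g : E, (∀ y, f z + ⟪g, y - z⟫ ≤ f y) → ‖g‖ ≤ C)
    {x : E} (hx : x ∈ X) {s : Finset κ} {w : κ → ℝ} {y v : κ → E}
    (hw0 : ∀ l ∈ s, 0 ≤ w l) (hw1 : ∑ l ∈ s, w l = 1) (hy : ∀ l ∈ s, y l ∈ X)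
    (hv : ∀ l ∈ s, ∀ u, f (y l) + ⟪v l, u - y l⟫ ≤ f u) (hD : ∀ l ∈ s, ‖x - y l‖ ≤ D)
    (z : E) : f x - f z - 2 * C * D ≤ ⟪∑ l ∈ s, w l • v l, x - z⟫ := by
  have hterm (l : κ) (hl : l ∈ s) : f x - f z - 2 * C * D ≤ ⟪v l, x - z⟫ := by
    have h₁ := hf.le_add_mul_norm_sub hC hx (y l)
    have h₂ := hv l hl z
    have h₃ : ⟪v l, x - z⟫ = ⟪v l, x - y l⟫ - ⟪v l, z - y l⟫ := by
      rw [← inner_sub_right, sub_sub_sub_cancel_right]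
    have h₄ := neg_le_of_abs_le (abs_real_inner_le_norm (v l) (x - y l))
    have h₅ := mul_le_mul (hC _ (hy l hl) _ (hv l hl)) (hD l hl) (norm_nonneg _) hC0
    have h₆ := mul_le_mul_of_nonneg_left (hD l hl) hC0
    linarith
  have hlin : IsLinearMap ℝ fun u : E => ⟪u, x - z⟫ :=
    ⟨fun a b => inner_add_left a b _, fun c a => real_inner_smul_left a _ c⟩
  exact (convex_halfSpace_ge hlin _).sum_mem hw0 hw1 hterm

theorem sum_sub_sum_sub_le_inner_sum_sum_smul {ι : Type*} [Fintype ι] {f : ι → E → ℝ}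
    (hf : ∀ i, ConvexOn ℝ Set.univ (f i)) (hC0 : 0 ≤ C)
    (hC : ∀ i, ∀ z ∈ X, ∀ g : E, (∀ y, f i z + ⟪g, y - z⟫ ≤ f i y) → ‖g‖ ≤ C)
    {x : E} (hx : x ∈ X) {B : ι → Finset κ} {w : ι → κ → ℝ} {y v : ι → κ → E}
    (hw0 : ∀ i, ∀ l ∈ B i, 0 ≤ w i l) (hw1 : ∀ i, ∑ l ∈ B i, w i l = 1)
    (hy : ∀ i, ∀ l ∈ B i, y i l ∈ X)
    (hv : ∀ i, ∀ l ∈ B i, ∀ u, f i (y i l) + ⟪v i l, u - y i l⟫ ≤ f i u)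
    (hD : ∀ i, ∀ l ∈ B i, ‖x - y i l‖ ≤ D) (z : E) :
    ∑ i, f i x - ∑ i, f i z - Fintype.card ι * (2 * C * D) ≤
      ⟪∑ i, ∑ l ∈ B i, w i l • v i l, x - z⟫ := by
  rw [sum_inner, ← sum_sub_distrib, ← Finset.card_univ, ← nsmul_eq_mul, ← sum_const,
    ← sum_sub_distrib]
  exact sum_le_sum fun i _ => (hf i).sub_sub_le_inner_sum_smul hC0 (hC i) hx (hw0 i) (hw1 i)
    (hy i) (hv i) (hD i) z

end IncrementalDirection

theorem incremental_cp_diminishing_step_liminf_general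
    (n m W : ℕ)
    (X : Set (EuclideanSpace ℝ (Fin n)))
    (hXconvex : Convex ℝ X)
    (f : Fin m → EuclideanSpace ℝ (Fin n) → ℝ)
    (hfconv : ∀ i, ConvexOn ℝ Set.univ (f i))
    (C : ℝ) (hC : 0 < C)
    -- every subgradient of any `f i` at any point of `X` has norm at most `C`
    (hCbound : ∀ i, ∀ z ∈ X, ∀ g : EuclideanSpace ℝ (Fin n),
      (∀ y, f i z + ⟪g, y - z⟫ ≤ f i y) → ‖g‖ ≤ C)
    -- `P` is the Euclidean projection onto `X`
    (P : EuclideanSpace ℝ (Fin n) → EuclideanSpace ℝ (Fin n))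
    (hP : ∀ u, P u ∈ X ∧ ∀ y ∈ X, ‖u - P u‖ ≤ ‖u - y‖)
    -- positive step sizes
    (t : ℕ → ℝ) (ht : ∀ k, 0 < t k)
    -- the iterates, lying in `X`
    (x : ℕ → EuclideanSpace ℝ (Fin n)) (hx : ∀ k, x k ∈ X)
    -- the index sets `B k i ⊆ {0, …, min k (W-1)}`
    (B : ℕ → Fin m → Finset ℕ)
    (hB : ∀ k i, ∀ l ∈ B k i, l ≤ min k (W - 1))
    -- `g i j` is a subgradient of `f i` at `x j` (used for `j = k - l`, `l ∈ B k i`)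
    (g : Fin m → ℕ → EuclideanSpace ℝ (Fin n))
    (hg : ∀ k i, ∀ l ∈ B k i, ∀ y,
      f i (x (k - l)) + ⟪g i (k - l), y - x (k - l)⟫ ≤ f i y)
    -- convex weights
    (α : ℕ → Fin m → ℕ → ℝ)
    (hα0 : ∀ k i l, 0 ≤ α k i l)
    (hα1 : ∀ k i, (B k i).Nonempty → ∑ l ∈ B k i, α k i l = 1)
    -- the update rule
    (hupdate : ∀ k, x (k + 1) =
      P (x k - t k • ∑ i : Fin m, ∑ l ∈ B k i, α k i l • g i (k - l)))    -- every component is evaluated at least once in every `W` iterations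
    (hfull : ∀ k, W - 1 ≤ k → ∀ i, (B k i).Nonempty)
    -- nonincreasing step sizes tending to `0` with divergent sum
    (hmono : ∀ k, t (k + 1) ≤ t k)
    (hlim : Filter.Tendsto t Filter.atTop (nhds 0))
    (hsum : Filter.Tendsto (fun N => ∑ k ∈ Finset.range N, t k)
      Filter.atTop Filter.atTop) :
    Filter.liminf (fun k => ((∑ i : Fin m, f i (x k) : ℝ) : EReal))
        Filter.atTop =
      ⨅ z ∈ X, ((∑ i : Fin m, f i z : ℝ) : EReal) := by
  set d := fun k => ∑ i : Fin m, ∑ l ∈ B k i, α k i l • g i (k - l)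
  set L := m * C
  -- `D k` bounds the distance from `x k` to every iterate whose subgradient enters `d k`
  set D := fun k => (W - 1 : ℕ) * t (k - (W - 1)) * L
  have hmin (k : ℕ) : ∀ y ∈ X, ‖x k - t k • d k - x (k + 1)‖ ≤ ‖x k - t k • d k - y‖ :=
    hupdate k ▸ (hP _).2
  have hα_le (k : ℕ) (i : Fin m) : ∑ l ∈ B k i, α k i l ≤ 1 :=
    (B k i).eq_empty_or_nonempty.elim (fun h => by simp [h]) fun h => (hα1 k i h).le
  have hdL (k : ℕ) : ‖d k‖ ≤ L := by
    simpa using norm_sum_sum_smul_le hC.le (fun i l _ => hα0 k i l) (hα_le k)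
      fun i l hl => hCbound i _ (hx _) _ (hg k i l hl)
  have hstep (k : ℕ) : ‖x (k + 1) - x k‖ ≤ t k * L :=
    (norm_sub_le_smul_norm_of_forall_norm_sub_le hXconvex (hx k) (ht k).le (hx _) (hmin k)).trans
      (mul_le_mul_of_nonneg_left (hdL k) (ht k).le)
  have hdrift (k : ℕ) (i : Fin m) : ∀ l ∈ B k i, ‖x k - x (k - l)‖ ≤ D k := fun l hl =>
    norm_sub_sub_le_of_norm_succ_sub_le (antitone_nat_of_succ_le hmono) (fun k => (ht k).le)
      (by positivity) hstep (le_of_le_min_left (hB k i l hl)) (le_of_le_min_right (hB k i l hl))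
  have he : Tendsto (fun k => m * (2 * C * D k) + t k * (L ^ 2 / 2)) atTop (𝓝 0) := by
    have hD : Tendsto D atTop (𝓝 0) := by
      simpa using ((hlim.comp (tendsto_sub_atTop_nat (W - 1))).const_mul _).mul_const L
    simpa using ((hD.const_mul (2 * C)).const_mul (m : ℝ)).add (hlim.mul_const (L ^ 2 / 2))
  refine liminf_coe_eq_iInf_of_frequently_lt (F := fun y => ∑ i, f i y) hx fun z hz r hr =>
    frequently_lt_of_le_sub_mul (a := fun k => ‖x k - z‖ ^ 2 / 2) (fun k => by positivity)
      (fun k => (ht k).le) hsum he hr ?_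
  filter_upwards [eventually_ge_atTop (W - 1)] with k hk
  have hinner := sum_sub_sum_sub_le_inner_sum_sum_smul hfconv hC.le hCbound (hx k)
    (fun i l _ => hα0 k i l) (fun i => hα1 k i (hfull k hk i)) (fun i l _ => hx (k - l))
    (hg k) (hdrift k) z
  rw [Fintype.card_fin] at hinner
  exact (half_norm_sub_sq_le_of_forall_norm_sub_le hXconvex (ht k).le (hx _) (hmin k) hz (hdL k)
    hinner).trans_eq (by ring)

/-- Diminishing, nonsummable step sizes: then
`liminf f (x k) = inf_X f` in the extended reals. -/
theorem incremental_cp_diminishing_step_liminf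
    (n m W : ℕ) (hW : 1 ≤ W)
    (X : Set (EuclideanSpace ℝ (Fin n)))
    (hXne : X.Nonempty) (hXclosed : IsClosed X) (hXconvex : Convex ℝ X)
    (f : Fin m → EuclideanSpace ℝ (Fin n) → ℝ)
    (hfconv : ∀ i, ConvexOn ℝ Set.univ (f i))
    (C : ℝ) (hC : 0 < C)
    -- every subgradient of any `f i` at any point of `X` has norm at most `C`
    (hCbound : ∀ i, ∀ z ∈ X, ∀ g : EuclideanSpace ℝ (Fin n),
      (∀ y, f i z + ⟪g, y - z⟫ ≤ f i y) → ‖g‖ ≤ C)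
    -- `P` is the Euclidean projection onto `X`
    (P : EuclideanSpace ℝ (Fin n) → EuclideanSpace ℝ (Fin n))
    (hP : ∀ u, P u ∈ X ∧ ∀ y ∈ X, ‖u - P u‖ ≤ ‖u - y‖)
    -- positive step sizes
    (t : ℕ → ℝ) (ht : ∀ k, 0 < t k)
    -- the iterates, lying in `X`
    (x : ℕ → EuclideanSpace ℝ (Fin n)) (hx : ∀ k, x k ∈ X)
    -- the index sets `B k i ⊆ {0, …, min k (W-1)}`
    (B : ℕ → Fin m → Finset ℕ)
    (hB : ∀ k i, ∀ l ∈ B k i, l ≤ min k (W - 1))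
    -- `g i j` is a subgradient of `f i` at `x j` (used for `j = k - l`, `l ∈ B k i`)
    (g : Fin m → ℕ → EuclideanSpace ℝ (Fin n))
    (hg : ∀ k i, ∀ l ∈ B k i, ∀ y,
      f i (x (k - l)) + ⟪g i (k - l), y - x (k - l)⟫ ≤ f i y)
    -- convex weights
    (α : ℕ → Fin m → ℕ → ℝ)
    (hα0 : ∀ k i l, 0 ≤ α k i l)
    (hα1 : ∀ k i, (B k i).Nonempty → ∑ l ∈ B k i, α k i l = 1)
    (hα2 : ∀ k i, B k i = ∅ → ∀ l, α k i l = 0)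
    -- the update rule
    (hupdate : ∀ k, x (k + 1) =
      P (x k - t k • ∑ i : Fin m, ∑ l ∈ B k i, α k i l • g i (k - l)))    -- every component is evaluated at least once in every `W` iterations
    (hfull : ∀ k, W - 1 ≤ k → ∀ i, (B k i).Nonempty)
    -- nonincreasing step sizes tending to `0` with divergent sum
    (hmono : ∀ k, t (k + 1) ≤ t k)
    (hlim : Filter.Tendsto t Filter.atTop (nhds 0))
    (hsum : Filter.Tendsto (fun N => ∑ k ∈ Finset.range N, t k)
      Filter.atTop Filter.atTop) :
    Filter.liminf (fun k => ((∑ i : Fin m, f i (x k) : ℝ) : EReal))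
        Filter.atTop =
      ⨅ z ∈ X, ((∑ i : Fin m, f i z : ℝ) : EReal) :=
  incremental_cp_diminishing_step_liminf_general n m W X hXconvex f hfconv C hC hCbound P hP t ht x
    hx B hB g hg α hα0 hα1 hupdate hfull hmono hlim hsum
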